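/- arXiv:math/0004010 — 7 statements merged into one kernel-verified Lean document; each statement's English description precedes it below -/
import Mathlib

section
/- Every free group is residually finite: for every free group F and every finite set S of non-identity elements of F, there exists a normal subgroup N of finite index in F such that N ∩ S = ∅. -/
/-!
Write a nontrivial element as a reduced word `x₀ ⋯ xₙ₋₁` and let each generator act on the
points `0, …, n` so that the letter `xᵢ` moves `i + 1` to `i`. For a fixed generator these
prescriptions form a partial injection precisely because the word is reduced, so they extend to
permutations of `Fin (n + 1)`; the word then moves `n` to `0`, hence survives in a finite
symmetric group. Finitely many such kernels intersect to the required normal subgroup.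
-/

open Equiv

theorem List.prod_map_smul_last_eq {ι M X : Type*} [Monoid M] [MulAction M X]
    (g : ι → M) (L : List ι) (p : Fin (L.length + 1) → X)
    (h : ∀ i : Fin L.length, g L[i] • p i.succ = p i.castSucc) :
    (L.map g).prod • p (Fin.last _) = p 0 := by
  induction L with
  | nil => simp
  | cons x L ih =>
    have hx : g x • p 1 = p 0 := h 0
    have hL : (L.map g).prod • p (Fin.last L.length).succ = p 1 :=
      ih (p ∘ Fin.succ) fun i => h i.succ
    rw [List.map_cons, List.prod_cons, mul_smul]
    exact (congrArg (g x • ·) hL).trans hx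

namespace FreeGroup

variable {α : Type*}

theorem IsReduced.snd_eq_of_adjacent {L : List (α × Bool)} (hL : IsReduced L)
    {i j : Fin L.length} (hij : (j : ℕ) = i + 1 ∨ (i : ℕ) = j + 1) (h : L[i].1 = L[j].1) :
    L[i].2 = L[j].2 := by
  obtain ⟨i, hi⟩ := i
  obtain ⟨j, hj⟩ := j
  obtain rfl | rfl := hij
  · exact hL.getElem i hj h
  · exact (hL.getElem j hi h.symm).symm

theorem IsReduced.exists_perm_apply_succ_eq_castSucc {L : List (α × Bool)} (hL : IsReduced L) :
    ∃ f : α → Perm (Fin (L.length + 1)), ∀ i : Fin L.length,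
      cond L[i].2 (f L[i].1) (f L[i].1)⁻¹ i.succ = i.castSucc := by
  let src (i : Fin L.length) : Fin (L.length + 1) := cond L[i].2 i.succ i.castSucc
  let tgt (i : Fin L.length) : Fin (L.length + 1) := cond L[i].2 i.castSucc i.succ
  have hgen (a : α) : ∃ σ : Perm (Fin (L.length + 1)),
      ∀ i : {i : Fin L.length // L[i].1 = a}, σ (src i) = tgt i := by
    refine Perm.exists_extending_pair _ _ ?_ ?_
    all_goals
      rintro ⟨i, rfl⟩ ⟨j, hj⟩ hij
      have hsign := fun h => hL.snd_eq_of_adjacent (i := i) (j := j) h hj.symm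
      refine Subtype.ext (Fin.ext (?_ : (i : ℕ) = j))
      cases hi : L[i].2 <;> cases hj' : L[j].2 <;>
        simp only [src, tgt, hi, hj', cond_true, cond_false, Fin.ext_iff, Fin.val_succ,
          Fin.val_castSucc, Bool.false_eq_true, Bool.true_eq_false, imp_false] at hij hsign <;>
        omega
  choose f hf using hgen
  refine ⟨f, fun i => ?_⟩
  have hi := hf _ ⟨i, rfl⟩
  simp only [src, tgt] at hi
  cases hb : L[i].2 <;> rw [hb] at hi
  · exact (Perm.inv_eq_iff_eq).mpr hi.symm
  · exact hi

theorem exists_monoidHom_perm_fin_apply_ne_one {w : FreeGroup α} (hw : w ≠ 1) :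
    ∃ (n : ℕ) (φ : FreeGroup α →* Perm (Fin n)), φ w ≠ 1 := by
  classical
  obtain ⟨f, hf⟩ := (isReduced_toWord (x := w)).exists_perm_apply_succ_eq_castSucc
  have hlen : w.toWord.length ≠ 0 := by simpa using hw
  refine ⟨_, lift f, fun h => ?_⟩
  have hpath : lift f w • Fin.last w.toWord.length = 0 := by
    rw [← congrArg (lift f) (mk_toWord (x := w)), lift_mk]
    exact List.prod_map_smul_last_eq _ _ id hf
  rw [h, one_smul] at hpath
  exact hlen (Fin.last_eq_zero_iff.mp hpath)

instance : Group.ResiduallyFinite (FreeGroup α) :=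
  Group.residuallyFinite_of_forall_exists_finite_monoidHom fun _ hw =>
    let ⟨_, φ, hφ⟩ := exists_monoidHom_perm_fin_apply_ne_one hw
    ⟨_, inferInstance, inferInstance, φ, hφ⟩

end FreeGroup

theorem Group.exists_finiteIndexNormalSubgroup_forall_notMem {G : Type*} [Group G]
    [ResiduallyFinite G] (S : Finset G) (hS : ∀ s ∈ S, s ≠ 1) :
    ∃ H : FiniteIndexNormalSubgroup G, ∀ s ∈ S, s ∉ H := by
  classical
  induction S using Finset.induction with
  | empty => exact ⟨.ofSubgroup ⊤, by simp⟩
  | insert s S _ ih =>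
    obtain ⟨H, hH⟩ := ih fun t ht => hS t (Finset.mem_insert_of_mem ht)
    obtain ⟨K, hK⟩ := exists_finiteIndexNormalSubgroup_notMem s (hS s (Finset.mem_insert_self s S))
    refine ⟨H ⊓ K, fun t ht hmem => ?_⟩
    obtain rfl | ht := Finset.mem_insert.mp ht
    · exact hK ((inf_le_right : H ⊓ K ≤ K) hmem)
    · exact hH t ht ((inf_le_left : H ⊓ K ≤ H) hmem)

/-- free groups are residually finite: every finite set of
non-identity elements can be avoided by a normal subgroup of finite index. -/
theorem freeGroup_residually_finite
    {α : Type*} (S : Finset (FreeGroup α)) (hS : ∀ s ∈ S, s ≠ 1) :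
    ∃ N : Subgroup (FreeGroup α), N.Normal ∧ N.FiniteIndex ∧ ∀ s ∈ S, s ∉ N := by
  obtain ⟨N, hN⟩ := Group.exists_finiteIndexNormalSubgroup_forall_notMem S hS
  exact ⟨N, inferInstance, inferInstance, hN⟩
end

section
/- Let G be a group of uniform isomorphisms of a uniform space X. If for every finite cover γ of X, every entourage V of X, and every finite collection g_1, …, g_n ∈ G there exists A ∈ γ such that ⋂_{i=1}^n V[g_i A] ≠ ∅, then for every bounded uniformly continuous function f : X → ℝ^N, every ε > 0, and every finite collection g_1, …, g_n ∈ G there is an x ∈ X with |f(x) − f(g_i x)| < ε for all i. -/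
/-- ((iii) ⇒ (ii) of Theorem 2.5.) Let a group G act on a uniform
space X by uniform isomorphisms.  If for every finite cover γ of X, every
entourage V and finitely many g₁,…,gₙ ∈ G there is an A ∈ γ with
⋂ᵢ V[gᵢ A] ≠ ∅, then every bounded uniformly continuous function
f : X → ℝ^N is ε-invariant at some point under any finitely many
elements of G. -/
theorem cover_condition_implies_almost_fixed_values
    {G X : Type*} [Group G] [UniformSpace X] [MulAction G X]
    (hact : ∀ g : G, UniformContinuous (fun x : X => g • x))
    (hcover : ∀ γ : Finset (Set X), (⋃₀ (↑γ : Set (Set X)) = Set.univ) →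
      ∀ V ∈ uniformity X, ∀ (n : ℕ) (g : Fin n → G),
        ∃ A ∈ γ, (⋂ i : Fin n, {x : X | ∃ a ∈ (g i • ·) '' A, (x, a) ∈ V}).Nonempty) :
    ∀ (N : ℕ) (f : X → EuclideanSpace ℝ (Fin N)),
      UniformContinuous f → Bornology.IsBounded (Set.range f) →
      ∀ ε > (0 : ℝ), ∀ (n : ℕ) (g : Fin n → G),
        ∃ x : X, ∀ i : Fin n, ‖f x - f (g i • x)‖ < ε := by
  intro N f hf hbdd ε hε n g
  classical
  set g' : Fin (n + 1) → G := Fin.cons 1 g with hg'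
  set F : X → (Fin (n + 1) → EuclideanSpace ℝ (Fin N)) := fun x j => f (g' j • x)
    with hFdef
  have hFuc : UniformContinuous F :=
    uniformContinuous_pi.2 fun j => hf.comp (hact (g' j))
  set ε' : ℝ := ε / 3 with hε'def
  have hε' : 0 < ε' := by positivity
  -- the range of F is totally bounded
  have htb : TotallyBounded (Set.range F) := by
    have hcomp : IsCompact (Set.pi Set.univ
        (fun _ : Fin (n + 1) => closure (Set.range f))) :=
      isCompact_univ_pi fun _ => hbdd.isCompact_closure
    refine TotallyBounded.subset ?_ hcomp.totallyBounded
    rintro _ ⟨x, rfl⟩ j _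
    exact subset_closure ⟨g' j • x, rfl⟩
  obtain ⟨t, htfin, htsub⟩ := Metric.totallyBounded_iff.1 htb (ε' / 2) (by positivity)
  -- build the finite cover
  set γ : Finset (Set X) :=
    htfin.toFinset.image (fun c => F ⁻¹' Metric.ball c (ε' / 2)) with hγdef
  have hγcover : ⋃₀ (↑γ : Set (Set X)) = Set.univ := by
    apply Set.eq_univ_of_forall
    intro x
    obtain ⟨c, hc, hxc⟩ := Set.mem_iUnion₂.1 (htsub ⟨x, rfl⟩)
    exact ⟨F ⁻¹' Metric.ball c (ε' / 2),
      Finset.mem_coe.2 (Finset.mem_image_of_mem _ (htfin.mem_toFinset.2 hc)), hxc⟩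
  -- the entourage
  set V : Set (X × X) := {p : X × X | dist (F p.1) (F p.2) < ε'} with hVdef
  have hV : V ∈ uniformity X := hFuc (Metric.dist_mem_uniformity hε')
  obtain ⟨A, hA, x, hx⟩ := hcover γ hγcover V hV (n + 1) g'
  obtain ⟨c, hc, rfl⟩ := Finset.mem_image.1 hA
  refine ⟨x, fun i => ?_⟩
  obtain ⟨a0, ⟨b0, hb0, rfl⟩, hx0⟩ := Set.mem_iInter.1 hx 0
  obtain ⟨a1, ⟨b1, hb1, rfl⟩, hx1⟩ := Set.mem_iInter.1 hx i.succ
  have key0 : dist (F x) (F (g' 0 • b0)) < ε' := hx0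
  have key1 : dist (F x) (F (g' i.succ • b1)) < ε' := hx1
  have hb0c : dist (F b0) c < ε' / 2 := hb0
  have hb1c : dist (F b1) c < ε' / 2 := hb1
  have hg0 : g' 0 = 1 := Fin.cons_zero _ _
  have hgs : g' i.succ = g i := Fin.cons_succ _ _ _
  -- term 1 : dist (f x) (f (g i • b1)) < ε'
  have t1 : dist (f x) (f (g i • b1)) < ε' := by
    have h := (dist_le_pi_dist (F x) (F (g' i.succ • b1)) 0).trans_lt key1
    simpa [hFdef, hg0, hgs, one_smul] using h
  -- term 2 : dist (f (g i • b1)) (f (g i • b0)) < ε'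
  have t2 : dist (f (g i • b1)) (f (g i • b0)) < ε' := by
    have hbb : dist (F b1) (F b0) < ε' :=
      (dist_triangle (F b1) c (F b0)).trans_lt <| by
        rw [dist_comm c (F b0)]; linarith
    have h := (dist_le_pi_dist (F b1) (F b0) i.succ).trans_lt hbb
    simpa [hFdef, hgs] using h
  -- term 3 : dist (f (g i • b0)) (f (g i • x)) < ε'
  have t3 : dist (f (g i • b0)) (f (g i • x)) < ε' := by
    have h := (dist_le_pi_dist (F x) (F (g' 0 • b0)) i.succ).trans_lt key0
    rw [dist_comm]
    simpa [hFdef, hg0, hgs, one_smul] using h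
  have := (dist_triangle4 (f x) (f (g i • b1)) (f (g i • b0)) (f (g i • x))).trans_lt
    (by linarith : dist (f x) (f (g i • b1)) + dist (f (g i • b1)) (f (g i • b0)) +
      dist (f (g i • b0)) (f (g i • x)) < ε)
  rw [← dist_eq_norm]
  exact this
end

section
/- Every bounded action of a topological group G on a uniform space X by uniform isomorphisms is jointly continuous (as a map G × X → X, where X carries the uniform topology). -/
/-!
Boundedness says exactly that the translations `x ↦ g • x` converge uniformly to the identity
as `g → 1`. Near `(g₀, x₀)` write `g • x = (g * g₀⁻¹) • (g₀ • x)`: the first factor tends to `1`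
and `g₀ • x` tends to `g₀ • x₀`, so uniform convergence yields `g • x → g₀ • x₀`.
-/

open Filter Topology

theorem continuousSMul_of_tendstoUniformly_smul_nhds_one {G X : Type*} [Group G]
    [TopologicalSpace G] [ContinuousMul G] [UniformSpace X] [MulAction G X]
    [ContinuousConstSMul G X] (h : TendstoUniformly (fun (g : G) (x : X) => g • x) id (𝓝 1)) :
    ContinuousSMul G X where
  continuous_smul := continuous_iff_continuousAt.2 fun ⟨g₀, x₀⟩ => by
    have hleft : Tendsto (fun p : G × X => p.1 * g₀⁻¹) (𝓝 (g₀, x₀)) (𝓝 1) := by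
      simpa using (continuous_fst.tendsto (g₀, x₀)).mul_const g₀⁻¹
    have hright : Tendsto (fun p : G × X => g₀ • p.2) (𝓝 (g₀, x₀)) (𝓝 (g₀ • x₀)) :=
      (continuous_const_smul g₀).continuousAt.comp continuous_snd.continuousAt
    have hlim := TendstoUniformly.tendsto_comp (fun u hu => hleft.eventually (h u hu))
      continuousAt_id hright
    simpa only [ContinuousAt, id, smul_smul, inv_mul_cancel_right] using hlim

/-- every bounded action of a topological group on a uniform space
by uniform isomorphisms is jointly continuous. -/
theorem bounded_action_continuous
    {G X : Type*} [Group G] [TopologicalSpace G] [IsTopologicalGroup G]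
    [UniformSpace X] [MulAction G X]
    (hunif : ∀ g : G, UniformContinuous (fun x : X => g • x))
    (hbounded : ∀ U ∈ uniformity X, ∃ W ∈ nhds (1 : G),
      ∀ g ∈ W, ∀ x : X, (g • x, x) ∈ U) :
    Continuous (fun p : G × X => p.1 • p.2) := by
  have : ContinuousConstSMul G X := ⟨fun g => (hunif g).continuous⟩
  refine (continuousSMul_of_tendstoUniformly_smul_nhds_one fun U hU => ?_).continuous_smul
  obtain ⟨W, hW, hWU⟩ := hbounded _ (symm_le_uniformity hU)
  exact mem_of_superset hW fun g hg x => hWU g hg x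
end

section
/- Let Y be a probability space with probability measure μ, and equip Y^n with the normalized Hamming distance ρ(f,g) = (1/n)·#{i : f_i ≠ g_i}. For every measurable A ⊆ Y^n with μ^⊗n(A) ≥ 1/2 and every ε > 0, the ε-neighbourhood A_ε = {y ∈ Y^n : ρ(y, A) < ε} satisfies μ^⊗n(A_ε) ≥ 1 − C_1·exp(−C_2·ε²·n), where C_1, C_2 > 0 are absolute constants independent of Y, μ, n, and A. -/
/-!
Talagrand's two-set inequality: if every point of `A` is at Hamming distance at least `k` from
every point of `B`, then `P(A) P(B) ≤ cosh (t/2) ^ (2n) e^{-tk}` for every `t ≥ 0`. It goes by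
induction on `n`, slicing along one coordinate: two slices of `A` and `B` are still `k`-separated
over the same point and `(k - 1)`-separated over different points, and the two bounds are combined
by comparing the `B`-slices with their supremum and applying AM-GM. Taking for `B` the complement
of (a measurable hull of) the `ε`-neighbourhood of `A`, `t = 2ε` and `cosh x ≤ exp (x²/2)` give
`P(B) ≤ 2 e^{-ε²n}` as soon as `P(A) ≥ 1/2`.
-/

open MeasureTheory Real
open scoped ENNReal NNReal

theorem Real.one_add_exp_sq (t : ℝ) : (1 + exp t) ^ 2 = 4 * exp t * cosh (t / 2) ^ 2 := by
  have h : exp t = exp (t / 2) ^ 2 := by rw [← exp_nat_mul]; ring_nf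
  rw [cosh_eq, h, exp_neg]
  field_simp
  ring

theorem mul_sq_add_mul_le_of_mul_le {f g β c E : ℝ} (hg : 0 ≤ g) (hc : 0 ≤ c) (hgβ : g ≤ β)
    (hdiag : f * g ≤ c) (hoff : f * β ≤ c * E) :
    f * β ^ 2 + c * E * g ≤ c * β * (1 + E) := by
  rcases le_or_gt (E * g) β with h | h
  · nlinarith [mul_le_mul_of_nonneg_right hoff (hg.trans hgβ), mul_le_mul_of_nonneg_left h hc]
  · -- multiplied by `g > 0`, the claim follows from `f g ≤ c` and `c (β - g) (E g - β) ≥ 0`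
    have hg : 0 < g := hg.lt_of_ne (by rintro rfl; linarith [h.trans_eq (mul_zero E)])
    refine le_of_mul_le_mul_right ?_ hg
    nlinarith [mul_le_mul_of_nonneg_right hdiag (sq_nonneg β),
      mul_nonneg (mul_nonneg hc (sub_nonneg.2 hgβ)) (sub_nonneg.2 h.le)]

theorem mul_le_mul_cosh_sq_of_mul_sq_add_le {a b β c t : ℝ} (ha : 0 ≤ a) (hb : 0 ≤ b) (hβ : 0 < β)
    (hc : 0 ≤ c) (h : a * β ^ 2 + c * exp t * b ≤ c * β * (1 + exp t)) :
    a * b ≤ c * cosh (t / 2) ^ 2 := by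
  have amgm : 4 * (a * β ^ 2) * (c * exp t * b) ≤ (c * β * (1 + exp t)) ^ 2 :=
    (four_mul_le_sq_add _ _).trans (pow_le_pow_left₀ (by positivity) h 2)
  rw [mul_pow, one_add_exp_sq] at amgm
  rcases hc.eq_or_lt with rfl | hc
  · have ha0 : a ≤ 0 := by nlinarith [pow_pos hβ 2]
    nlinarith
  · refine le_of_mul_le_mul_left ?_ (by positivity : 0 < 4 * exp t * c * β ^ 2)
    linear_combination amgm

namespace ENNReal

theorem mul_sq_add_mul_le_of_mul_le {f g β c E : ℝ≥0∞} (hf : f ≠ ∞) (hβ : β ≠ ∞) (hc : c ≠ ∞)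
    (hE : E ≠ ∞) (hgβ : g ≤ β) (hdiag : f * g ≤ c) (hoff : f * β ≤ c * E) :
    f * β ^ 2 + c * E * g ≤ c * β * (1 + E) := by
  lift g to ℝ≥0 using ne_top_of_le_ne_top hβ hgβ
  lift f to ℝ≥0 using hf
  lift β to ℝ≥0 using hβ
  lift c to ℝ≥0 using hc
  lift E to ℝ≥0 using hE
  have := _root_.mul_sq_add_mul_le_of_mul_le g.2 c.2 (f := f) (E := E) (by exact_mod_cast hgβ)
    (by exact_mod_cast hdiag) (by exact_mod_cast hoff)
  exact_mod_cast this

theorem mul_le_mul_cosh_sq_of_mul_sq_add_le {a b β c : ℝ≥0∞} (ha : a ≠ ∞) (hb : b ≠ ∞)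
    (hβ : β ≠ ∞) (hβ0 : β ≠ 0) (hc : c ≠ ∞) {t : ℝ}
    (h : a * β ^ 2 + c * ENNReal.ofReal (exp t) * b ≤ c * β * (1 + ENNReal.ofReal (exp t))) :
    a * b ≤ c * ENNReal.ofReal (cosh (t / 2) ^ 2) := by
  lift a to ℝ≥0 using ha
  lift b to ℝ≥0 using hb
  lift β to ℝ≥0 using hβ
  lift c to ℝ≥0 using hc
  rw [ENNReal.ofReal_eq_coe_nnreal (exp_nonneg t)] at h
  rw [ENNReal.ofReal_eq_coe_nnreal (sq_nonneg _)]
  have hβ_pos : (0 : ℝ) < β := NNReal.coe_pos.2 (pos_iff_ne_zero.2 (by exact_mod_cast hβ0))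
  have := _root_.mul_le_mul_cosh_sq_of_mul_sq_add_le a.2 b.2 hβ_pos c.2 (t := t)
    (by exact_mod_cast h)
  exact_mod_cast this

end ENNReal

theorem lintegral_mul_lintegral_le_of_mul_le {Y : Type*} [MeasurableSpace Y] {μ : Measure Y}
    [IsProbabilityMeasure μ] {f g : Y → ℝ≥0∞} (hf : ∀ x, f x ≤ 1) (hg : ∀ x, g x ≤ 1)
    {c : ℝ≥0∞} (hc : c ≠ ∞) {t : ℝ} (hdiag : ∀ x, f x * g x ≤ c)
    (hoff : ∀ x w, f x * g w ≤ c * ENNReal.ofReal (exp t)) :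
    (∫⁻ x, f x ∂μ) * ∫⁻ x, g x ∂μ ≤ c * ENNReal.ofReal (cosh (t / 2) ^ 2) := by
  set E := ENNReal.ofReal (exp t)
  set β := ⨆ w, g w
  have hβ : β ≠ ∞ := ne_top_of_le_ne_top ENNReal.one_ne_top (iSup_le hg)
  rcases eq_or_ne β 0 with hβ0 | hβ0
  · have hg0 : ∀ w, g w = 0 := fun w => nonpos_iff_eq_zero.1 (hβ0 ▸ le_iSup g w)
    simp [hg0]
  have hpoint : ∀ x, f x * β ^ 2 + c * E * g x ≤ c * β * (1 + E) := fun x =>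
    ENNReal.mul_sq_add_mul_le_of_mul_le (ne_top_of_le_ne_top ENNReal.one_ne_top (hf x)) hβ hc
      ENNReal.ofReal_ne_top (le_iSup g x) (hdiag x)
      (by rw [ENNReal.mul_iSup]; exact iSup_le (hoff x))
  have hint : (∫⁻ x, f x ∂μ) * β ^ 2 + c * E * ∫⁻ x, g x ∂μ ≤ c * β * (1 + E) :=
    calc _ = ∫⁻ x, f x * β ^ 2 ∂μ + ∫⁻ x, c * E * g x ∂μ := by
          rw [lintegral_mul_const' _ _ (ENNReal.pow_ne_top hβ),
            lintegral_const_mul' _ _ (ENNReal.mul_ne_top hc ENNReal.ofReal_ne_top)]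
      _ ≤ ∫⁻ x, (f x * β ^ 2 + c * E * g x) ∂μ := le_lintegral_add _ _
      _ ≤ ∫⁻ _, c * β * (1 + E) ∂μ := lintegral_mono hpoint
      _ = c * β * (1 + E) := by simp
  have hfin : ∀ h : Y → ℝ≥0∞, (∀ x, h x ≤ 1) → ∫⁻ x, h x ∂μ ≠ ∞ := fun h h1 =>
    ne_top_of_le_ne_top ENNReal.one_ne_top ((lintegral_mono h1).trans_eq (by simp))
  exact ENNReal.mul_le_mul_cosh_sq_of_mul_sq_add_le (hfin f hf) (hfin g hg) hβ hβ0 hc hint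

theorem hammingDist_insertNth {n : ℕ} {α : Fin (n + 1) → Type*} [∀ i, DecidableEq (α i)]
    (p : Fin (n + 1)) (a b : α p) (x y : ∀ j, α (p.succAbove j)) :
    hammingDist (p.insertNth a x) (p.insertNth b y) =
      hammingDist x y + if a = b then 0 else 1 := by
  simp only [hammingDist, Finset.card_filter, Fin.sum_univ_succAbove _ p,
    Fin.insertNth_apply_same, Fin.insertNth_apply_succAbove]
  split_ifs <;> simp_all [add_comm]

theorem MeasureTheory.Measure.pi_eq_lintegral_insertNth {n : ℕ} {X : Fin (n + 1) → Type*}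
    [∀ i, MeasurableSpace (X i)] (μ : ∀ i, Measure (X i)) [∀ i, SigmaFinite (μ i)]
    (p : Fin (n + 1)) {A : Set (∀ i, X i)} (hA : MeasurableSet A) :
    Measure.pi μ A =
      ∫⁻ x, Measure.pi (fun j => μ (p.succAbove j)) {y | p.insertNth x y ∈ A} ∂μ p := by
  rw [← (measurePreserving_piFinSuccAbove μ p).symm.measure_preimage hA.nullMeasurableSet,
    Measure.prod_apply ((MeasurableEquiv.piFinSuccAbove X p).symm.measurable hA)]
  rfl

theorem measurableSet_insertNth_preimage {n : ℕ} {X : Fin (n + 1) → Type*}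
    [∀ i, MeasurableSpace (X i)] (p : Fin (n + 1)) (x : X p) {A : Set (∀ i, X i)}
    (hA : MeasurableSet A) : MeasurableSet {y | p.insertNth x y ∈ A} :=
  (MeasurableEquiv.piFinSuccAbove X p).symm.measurable.comp measurable_prodMk_left hA

theorem measure_pi_mul_measure_pi_le_of_le_hammingDist {n : ℕ} {X : Fin n → Type*}
    [∀ i, MeasurableSpace (X i)] [∀ i, DecidableEq (X i)] (μ : ∀ i, Measure (X i))
    [∀ i, IsProbabilityMeasure (μ i)] {t : ℝ} (ht : 0 ≤ t) {k : ℝ} {A B : Set (∀ i, X i)}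
    (hA : MeasurableSet A) (hB : MeasurableSet B)
    (hAB : ∀ a ∈ A, ∀ b ∈ B, k ≤ hammingDist a b) :
    Measure.pi μ A * Measure.pi μ B ≤
      ENNReal.ofReal (cosh (t / 2) ^ (2 * n) * exp (-(t * k))) := by
  induction n generalizing k with
  | zero =>
    rcases A.eq_empty_or_nonempty with rfl | ⟨a, ha⟩
    · simp
    rcases B.eq_empty_or_nonempty with rfl | ⟨b, hb⟩
    · simp
    have hk : k ≤ 0 := by simpa [Subsingleton.elim a b] using hAB a ha b hb
    calc Measure.pi μ A * Measure.pi μ B ≤ 1 * 1 := mul_le_mul' prob_le_one prob_le_one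
      _ ≤ _ := by
        rw [mul_one, pow_zero, one_mul, ENNReal.one_le_ofReal]
        exact one_le_exp (by nlinarith)
  | succ n ih =>
    rw [Measure.pi_eq_lintegral_insertNth μ 0 hA, Measure.pi_eq_lintegral_insertNth μ 0 hB]
    have hc : 0 ≤ cosh (t / 2) ^ (2 * n) * exp (-(t * k)) := by positivity
    refine (lintegral_mul_lintegral_le_of_mul_le (fun _ => prob_le_one) (fun _ => prob_le_one)
      (ENNReal.ofReal_ne_top (r := cosh (t / 2) ^ (2 * n) * exp (-(t * k)))) (t := t)
      (fun x => ?_) (fun x w => ?_)).trans_eq ?_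
    · refine ih _ (measurableSet_insertNth_preimage 0 x hA)
        (measurableSet_insertNth_preimage 0 x hB) fun y hy z hz => ?_
      simpa [hammingDist_insertNth] using hAB _ hy _ hz
    · calc _ ≤ ENNReal.ofReal (cosh (t / 2) ^ (2 * n) * exp (-(t * (k - 1)))) :=
            ih _ (measurableSet_insertNth_preimage 0 x hA)
              (measurableSet_insertNth_preimage 0 w hB) fun y hy z hz => ?_
        _ = _ := by
          rw [← ENNReal.ofReal_mul hc, mul_assoc, ← exp_add]
          ring_nf
      have := hAB _ hy _ hz
      rw [hammingDist_insertNth] at this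
      push_cast at this
      split_ifs at this <;> linarith
    · rw [← ENNReal.ofReal_mul hc]
      ring_nf

theorem measure_pi_mul_measure_pi_le_exp_neg {n : ℕ} {X : Fin n → Type*}
    [∀ i, MeasurableSpace (X i)] [∀ i, DecidableEq (X i)] (μ : ∀ i, Measure (X i))
    [∀ i, IsProbabilityMeasure (μ i)] {ε : ℝ} (hε : 0 ≤ ε) {A B : Set (∀ i, X i)}
    (hA : MeasurableSet A) (hB : MeasurableSet B)
    (hAB : ∀ a ∈ A, ∀ b ∈ B, ε * n ≤ hammingDist a b) :
    Measure.pi μ A * Measure.pi μ B ≤ ENNReal.ofReal (exp (-(ε ^ 2 * n))) := by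
  refine (measure_pi_mul_measure_pi_le_of_le_hammingDist μ (by positivity : 0 ≤ 2 * ε)
    hA hB hAB).trans (ENNReal.ofReal_le_ofReal ?_)
  calc cosh (2 * ε / 2) ^ (2 * n) * exp (-(2 * ε * (ε * n)))
      ≤ exp (ε ^ 2 / 2) ^ (2 * n) * exp (-(2 * ε * (ε * n))) := by
        gcongr
        simpa using cosh_le_exp_half_sq ε
    _ = exp (-(ε ^ 2 * n)) := by
        rw [← exp_nat_mul, ← exp_add]
        push_cast
        ring_nf

theorem ncard_setOf_ne_eq_hammingDist {ι : Type*} [Fintype ι] {β : ι → Type*}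
    [∀ i, DecidableEq (β i)] (x y : ∀ i, β i) :
    {i | x i ≠ y i}.ncard = hammingDist x y := by
  rw [hammingDist, ← Set.ncard_coe_finset]
  simp

theorem measure_pi_le_of_half_le_of_le_hammingDist {n : ℕ} {X : Fin n → Type*}
    [∀ i, MeasurableSpace (X i)] [∀ i, DecidableEq (X i)] (μ : ∀ i, Measure (X i))
    [∀ i, IsProbabilityMeasure (μ i)] {ε : ℝ} (hε : 0 ≤ ε) {A B : Set (∀ i, X i)}
    (hA : MeasurableSet A) (hB : MeasurableSet B) (hA_half : 1 / 2 ≤ Measure.pi μ A)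
    (hAB : ∀ a ∈ A, ∀ b ∈ B, ε * n ≤ hammingDist a b) :
    Measure.pi μ B ≤ ENNReal.ofReal (2 * exp (-(ε ^ 2 * n))) :=
  calc Measure.pi μ B = 2 * (1 / 2 * Measure.pi μ B) := by
        rw [← mul_assoc, ENNReal.mul_div_cancel two_ne_zero ENNReal.ofNat_ne_top, one_mul]
    _ ≤ 2 * (Measure.pi μ A * Measure.pi μ B) := by gcongr
    _ ≤ 2 * ENNReal.ofReal (exp (-(ε ^ 2 * n))) := by
        gcongr
        exact measure_pi_mul_measure_pi_le_exp_neg μ hε hA hB hAB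
    _ = ENNReal.ofReal (2 * exp (-(ε ^ 2 * n))) := by
        rw [ENNReal.ofReal_mul zero_le_two, ENNReal.ofReal_ofNat]

/-- Talagrand/Schechtman: concentration of product measures with
respect to the normalized Hamming distance, with Gaussian bounds given by
absolute constants independent of the probability space. -/
theorem hamming_concentration :
    ∃ C₁ C₂ : ℝ, 0 < C₁ ∧ 0 < C₂ ∧
      ∀ (Y : Type) (_ : MeasurableSpace Y) (μ : Measure Y),
        IsProbabilityMeasure μ →
        ∀ (n : ℕ) (A : Set (Fin n → Y)), MeasurableSet A →
          (1 / 2 : ENNReal) ≤ Measure.pi (fun _ : Fin n => μ) A →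
          ∀ ε : ℝ, 0 < ε →
            1 - ENNReal.ofReal (C₁ * Real.exp (-C₂ * ε ^ 2 * n)) ≤
              Measure.pi (fun _ : Fin n => μ)
                {y | ∃ a ∈ A, ((Set.ncard {i : Fin n | y i ≠ a i} : ℝ) / n) < ε} := by
  refine ⟨2, 1, two_pos, one_pos, fun Y _ μ _ n A hA hA_half ε hε => ?_⟩
  classical
  set P := Measure.pi (fun _ : Fin n => μ)
  set S : Set (Fin n → Y) := {y | ∃ a ∈ A, ((Set.ncard {i : Fin n | y i ≠ a i} : ℝ) / n) < ε}
  have hT : MeasurableSet (toMeasurable P S) := measurableSet_toMeasurable P S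
  have hfar : ∀ a ∈ A, ∀ b ∈ (toMeasurable P S)ᶜ, ε * n ≤ hammingDist a b := by
    intro a ha b hb
    have hbS : ¬ ((hammingDist b a : ℝ) / n < ε) := by
      rw [← ncard_setOf_ne_eq_hammingDist]
      exact fun h => hb (subset_toMeasurable P S ⟨a, ha, h⟩)
    rw [hammingDist_comm]
    rcases n.eq_zero_or_pos with rfl | hn
    · simp
    · rwa [not_lt, le_div_iff₀ (by exact_mod_cast hn)] at hbS
  have hsmall := measure_pi_le_of_half_le_of_le_hammingDist (fun _ => μ) hε.le hA hT.compl
    hA_half hfar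
  rw [← measure_toMeasurable S, ← compl_compl (toMeasurable P S), prob_compl_eq_one_sub hT.compl,
    neg_one_mul, neg_mul]
  exact tsub_le_tsub_left hsmall 1
end

section
/- Let G be a topological group acting continuously by isometries on a metric space (X, ρ), and suppose the action is bounded. Let L_0(I, G) be the group of measurable maps from the unit interval with Lebesgue measure to G with the topology of convergence in measure, acting pointwise on the space L_0(I, X) of measurable maps I → X equipped with the metric me_λ(f,g) = inf{ ε > 0 : μ{x : ρ(f(x), g(x)) > ε} < λε } for some fixed λ > 0. Then this pointwise action of L_0(I, G) on L_0(I, X) is by isometries and is continuous. -/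
open MeasureTheory

/-- Lebesgue measure on the unit interval I = [0,1]. -/
noncomputable def unitIntervalMeasure : Measure ℝ :=
  volume.restrict (Set.Icc (0 : ℝ) 1)

/-- The canonical metric `me_λ` of convergence in measure on maps from the
unit interval to a metric space X:
`me_λ(f,g) = inf { ε > 0 : μ{x : d(f(x),g(x)) > ε} < λ·ε }`. -/
noncomputable def meDist (lam : ℝ) {X : Type*} [MetricSpace X]
    (f g : ℝ → X) : ℝ :=
  sInf {ε : ℝ | 0 < ε ∧
    unitIntervalMeasure {x | ε < dist (f x) (g x)} < ENNReal.ofReal (lam * ε)}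

/- Since `g t` acts isometrically, `ρ(g₁ t • f t, g t • f t) = ρ(((g t)⁻¹ * g₁ t) • f t, f t)`,
so the two maps are `ε`-close wherever `(g t)⁻¹ * g₁ t` lies in an `ε`-bounded neighbourhood `W`;
the exceptional set has measure `< λε/2 < λε`, whence `me_λ ≤ ε`. -/

section meDist

variable {X Y : Type*} [MetricSpace X] [MetricSpace Y] {lam : ℝ}

theorem meDist_congr_of_dist_eq {f₁ f₂ : ℝ → X} {h₁ h₂ : ℝ → Y}
    (h : ∀ t, dist (h₁ t) (h₂ t) = dist (f₁ t) (f₂ t)) :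
    meDist lam h₁ h₂ = meDist lam f₁ f₂ := by
  simp only [meDist, h]

theorem meDist_le_of_measure_lt {f g : ℝ → X} {ε : ℝ} (hε : 0 < ε)
    (h : unitIntervalMeasure {t | ε < dist (f t) (g t)} < ENNReal.ofReal (lam * ε)) :
    meDist lam f g ≤ ε :=
  csInf_le ⟨0, fun _ hδ => hδ.1.le⟩ ⟨hε, h⟩

end meDist

theorem setOf_lt_dist_smul_subset {G X : Type*} [Group G] [PseudoMetricSpace X] [MulAction G X]
    [IsIsometricSMul G X] {ε : ℝ} {W : Set G} (hW : ∀ w ∈ W, ∀ x : X, dist (w • x) x < ε)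
    (g g₁ : ℝ → G) (f : ℝ → X) :
    {t | ε < dist (g₁ t • f t) (g t • f t)} ⊆ {t | (g t)⁻¹ * g₁ t ∉ W} := by
  intro t ht hw
  have hclose := hW _ hw (f t)
  rw [← dist_smul (g t), smul_smul, mul_inv_cancel_left] at hclose
  exact ht.not_gt hclose

theorem hartmanMycielski_action_isometric_continuous_general
    {G X : Type*} [Group G] [TopologicalSpace G]
    [MetricSpace X] [MulAction G X]
    (hiso : ∀ g : G, Isometry (fun x : X => g • x))
    (hbounded : ∀ ε > (0 : ℝ), ∃ W ∈ nhds (1 : G),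
      ∀ w ∈ W, ∀ x : X, dist (w • x) x < ε)
    (lam : ℝ) (hlam : 0 < lam) :
    -- the pointwise action is by isometries of me_λ
    (∀ (g : ℝ → G) (f₁ f₂ : ℝ → X),
      meDist lam (fun t => g t • f₁ t) (fun t => g t • f₂ t) = meDist lam f₁ f₂) ∧
    -- the orbit maps are continuous for the topology of convergence in measure
    (∀ (g : ℝ → G) (f : ℝ → X), ∀ ε > (0 : ℝ), ∃ W ∈ nhds (1 : G),
      ∀ g₁ : ℝ → G,
        unitIntervalMeasure {t | (g t)⁻¹ * g₁ t ∉ W} <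
          ENNReal.ofReal (lam * ε / 2) →
        meDist lam (fun t => g₁ t • f t) (fun t => g t • f t) ≤ ε) := by
  have : IsIsometricSMul G X := ⟨hiso⟩
  refine ⟨fun g f₁ f₂ => meDist_congr_of_dist_eq fun t => dist_smul (g t) _ _,
    fun g f ε hε => ?_⟩
  obtain ⟨W, hW, hWε⟩ := hbounded ε hε
  refine ⟨W, hW, fun g₁ hsmall => meDist_le_of_measure_lt hε ?_⟩
  calc unitIntervalMeasure {t | ε < dist (g₁ t • f t) (g t • f t)}
      ≤ unitIntervalMeasure {t | (g t)⁻¹ * g₁ t ∉ W} :=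
        measure_mono (setOf_lt_dist_smul_subset hWε g g₁ f)
    _ < ENNReal.ofReal (lam * ε / 2) := hsmall
    _ ≤ ENNReal.ofReal (lam * ε) := ENNReal.ofReal_le_ofReal (by linarith [mul_pos hlam hε])

/-- Lemma 2.12: if a topological group G acts continuously,
isometrically and boundedly on a metric space X, then the pointwise action of
L₀(I,G) on L₀(I,X) is by isometries for the metric `me_λ`, and the orbit maps
are continuous with respect to convergence in measure: the basic neighbourhood
`g·[W, λε/2]` of `g` is mapped into the ε-ball around `g·f`. -/
theorem hartmanMycielski_action_isometric_continuous
    {G X : Type*} [Group G] [TopologicalSpace G] [IsTopologicalGroup G]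
    [MetricSpace X] [MulAction G X]
    (hiso : ∀ g : G, Isometry (fun x : X => g • x))
    (hcont : Continuous (fun p : G × X => p.1 • p.2))
    (hbounded : ∀ ε > (0 : ℝ), ∃ W ∈ nhds (1 : G),
      ∀ w ∈ W, ∀ x : X, dist (w • x) x < ε)
    (lam : ℝ) (hlam : 0 < lam) :
    -- the pointwise action is by isometries of me_λ
    (∀ (g : ℝ → G) (f₁ f₂ : ℝ → X),
      meDist lam (fun t => g t • f₁ t) (fun t => g t • f₂ t) = meDist lam f₁ f₂) ∧
    -- the orbit maps are continuous for the topology of convergence in measure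
    (∀ (g : ℝ → G) (f : ℝ → X), ∀ ε > (0 : ℝ), ∃ W ∈ nhds (1 : G),
      ∀ g₁ : ℝ → G,
        unitIntervalMeasure {t | (g t)⁻¹ * g₁ t ∉ W} <
          ENNReal.ofReal (lam * ε / 2) →
        meDist lam (fun t => g₁ t • f t) (fun t => g t • f t) ≤ ε) :=
  hartmanMycielski_action_isometric_continuous_general hiso hbounded lam hlam
end

section
/- Let X be a metric subspace of the unit sphere S of a real Hilbert space H. Then every surjective isometry of X extends uniquely to an orthogonal (linear isometric) transformation of the closed linear span of X in H; in particular, for x, y ∈ S, the inner product satisfies ⟨x, y⟩ = 1 − (1/2)·d(x,y)², where d is the norm distance. -/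
/-!
On the unit sphere `⟪x, y⟫ = 1 - ‖x - y‖² / 2`, so an isometry `φ` of `X` preserves inner
products, hence the norm of every finite linear combination: `‖∑ aₓ φ x‖ = ‖∑ aₓ x‖`. Read through
the two maps `a ↦ ∑ aₓ x` and `a ↦ ∑ aₓ φ x` from `X →₀ ℝ` to the closed span, the identity of
`X →₀ ℝ` is therefore norm preserving; both maps have dense range (the second because `φ` is
onto), so it extends by continuity to a linear isometry of the closed span onto itself sending
`x` to `φ x`. It is unique because a continuous linear map is determined by its values on a set
with dense span.
-/

open Submodule Finsupp Metric
open scoped InnerProductSpace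

section TopologicalModule

variable {R M : Type*} [Semiring R] [TopologicalSpace M] [AddCommMonoid M] [Module R M]
  [ContinuousConstSMul R M] [ContinuousAdd M]

theorem Submodule.subset_topologicalClosure_span (s : Set M) :
    s ⊆ (span R s).topologicalClosure :=
  subset_span.trans (le_topologicalClosure _)

theorem Submodule.dense_span_preimage_topologicalClosure (s : Set M) :
    Dense (span R (Subtype.val ⁻¹' s : Set (span R s).topologicalClosure) :
      Set (span R s).topologicalClosure) := by
  set C := (span R s).topologicalClosure
  have hs : s ⊆ Set.range C.subtype := by
    rw [coe_subtype, Subtype.range_coe]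
    exact subset_topologicalClosure_span s
  have himage : C.subtype '' span R (C.subtype ⁻¹' s) = span R s := by
    rw [← map_coe, map_span, Set.image_preimage_eq_of_subset hs]
  refine Topology.IsInducing.subtypeVal.dense_iff.2 fun c => ?_
  rw [← coe_subtype, himage]
  exact c.2

theorem Submodule.denseRange_linearCombination_inclusion {ι : Type*} {s : Set M} {v : ι → s}
    (hv : Function.Surjective v) :
    DenseRange
      (linearCombination R (Set.inclusion (subset_topologicalClosure_span (R := R) s) ∘ v)) := by
  rw [DenseRange, ← LinearMap.coe_range, range_linearCombination, hv.range_comp,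
    Set.range_inclusion]
  exact dense_span_preimage_topologicalClosure s

end TopologicalModule

theorem LinearIsometryEquiv.ext_on_topologicalClosure_span {𝕜 E F : Type*} [NormedField 𝕜]
    [SeminormedAddCommGroup E] [NormedSpace 𝕜 E] [NormedAddCommGroup F] [NormedSpace 𝕜 F]
    {s : Set E} {T₁ T₂ : (span 𝕜 s).topologicalClosure ≃ₗᵢ[𝕜] F}
    (h : ∀ x (hx : x ∈ s), T₁ ⟨x, subset_topologicalClosure_span s hx⟩ =
      T₂ ⟨x, subset_topologicalClosure_span s hx⟩) :
    T₁ = T₂ := by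
  have := ContinuousLinearMap.ext_on (dense_span_preimage_topologicalClosure s)
    (f := T₁.toContinuousLinearEquiv.toContinuousLinearMap)
    (g := T₂.toContinuousLinearEquiv.toContinuousLinearMap) fun c hc => h c hc
  ext c
  exact congr($this c)

theorem real_inner_eq_one_sub_dist_sq_div_two {H : Type*} [NormedAddCommGroup H]
    [InnerProductSpace ℝ H] {x y : H} (hx : x ∈ sphere (0 : H) 1) (hy : y ∈ sphere (0 : H) 1) :
    ⟪x, y⟫_ℝ = 1 - dist x y ^ 2 / 2 := by
  rw [mem_sphere_zero_iff_norm] at hx hy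
  rw [dist_eq_norm, norm_sub_sq_real, hx, hy]
  ring

theorem Isometry.real_inner_map_map_of_subset_sphere {H H' : Type*} [NormedAddCommGroup H]
    [InnerProductSpace ℝ H] [NormedAddCommGroup H'] [InnerProductSpace ℝ H'] {X : Set H}
    {Y : Set H'} (hX : X ⊆ sphere (0 : H) 1) (hY : Y ⊆ sphere (0 : H') 1) {φ : X → Y}
    (hφ : Isometry φ) (x y : X) : ⟪(φ x : H'), φ y⟫_ℝ = ⟪(x : H), y⟫_ℝ := by
  rw [real_inner_eq_one_sub_dist_sq_div_two (hY (φ x).2) (hY (φ y).2),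
    real_inner_eq_one_sub_dist_sq_div_two (hX x.2) (hX y.2), ← Subtype.dist_eq,
    ← Subtype.dist_eq, hφ.dist_eq]

section InnerProductSpace

variable {𝕜 E F : Type*} [RCLike 𝕜] [NormedAddCommGroup E] [InnerProductSpace 𝕜 E]
  [NormedAddCommGroup F] [InnerProductSpace 𝕜 F]

theorem norm_linearCombination_eq_of_inner_eq {ι : Type*} {v : ι → E} {w : ι → F}
    (h : ∀ i j, ⟪w i, w j⟫_𝕜 = ⟪v i, v j⟫_𝕜) (l : ι →₀ 𝕜) :
    ‖linearCombination 𝕜 w l‖ = ‖linearCombination 𝕜 v l‖ := by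
  simp only [norm_eq_sqrt_re_inner (𝕜 := 𝕜), linearCombination_apply, Finsupp.sum_inner,
    Finsupp.inner_sum, inner_smul_left, inner_smul_right, h]

variable [CompleteSpace E] [CompleteSpace F] {s : Set E} {t : Set F}

noncomputable def closedSpanEquivOfInner (f : s → t) (hf : Function.Surjective f)
    (h : ∀ x y, ⟪(f x : F), f y⟫_𝕜 = ⟪(x : E), y⟫_𝕜) :
    (span 𝕜 s).topologicalClosure ≃ₗᵢ[𝕜] (span 𝕜 t).topologicalClosure :=
  (LinearEquiv.refl 𝕜 (s →₀ 𝕜)).extendOfIsometry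
    (linearCombination 𝕜 (Set.inclusion (subset_topologicalClosure_span s)))
    (linearCombination 𝕜 (Set.inclusion (subset_topologicalClosure_span t) ∘ f))
    (denseRange_linearCombination_inclusion Function.surjective_id)
    (denseRange_linearCombination_inclusion hf)
    fun l => by
      simp only [LinearEquiv.refl_apply, coe_norm, ← subtype_apply, apply_linearCombination]
      exact norm_linearCombination_eq_of_inner_eq h l

theorem closedSpanEquivOfInner_apply (f : s → t) (hf : Function.Surjective f)
    (h : ∀ x y, ⟪(f x : F), f y⟫_𝕜 = ⟪(x : E), y⟫_𝕜) (x : s) :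
    (closedSpanEquivOfInner f hf h ⟨x, subset_topologicalClosure_span s x.2⟩ : F) = f x := by
  have hx : (⟨x, subset_topologicalClosure_span s x.2⟩ : (span 𝕜 s).topologicalClosure) =
      linearCombination 𝕜 (Set.inclusion (subset_topologicalClosure_span s)) (single x 1) := by
    rw [linearCombination_single, one_smul]
  rw [hx, closedSpanEquivOfInner, LinearEquiv.extendOfIsometry_eq, LinearEquiv.refl_apply,
    linearCombination_single, one_smul]
  rfl

end InnerProductSpace

/-- every surjective isometry of a metric subspace X of the unit
sphere of a real Hilbert space extends uniquely to an orthogonal (linear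
isometric) transformation of the closed linear span of X; moreover on the unit
sphere the inner product is determined by the distance via
⟨x,y⟩ = 1 − d(x,y)²/2. -/
theorem sphere_subspace_isometry_extends
    {H : Type*} [NormedAddCommGroup H] [InnerProductSpace ℝ H] [CompleteSpace H]
    (X : Set H) (hX : X ⊆ Metric.sphere (0 : H) 1)
    (φ : X → X) (hbij : Function.Bijective φ) (hiso : Isometry φ) :
    (∀ x y : H, x ∈ Metric.sphere (0 : H) 1 → y ∈ Metric.sphere (0 : H) 1 →
      (inner ℝ x y : ℝ) = 1 - dist x y ^ 2 / 2) ∧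
    ∃! T : (Submodule.span ℝ X).topologicalClosure ≃ₗᵢ[ℝ]
            (Submodule.span ℝ X).topologicalClosure,
      ∀ (x : H) (hx : x ∈ X),
        (T ⟨x, Submodule.le_topologicalClosure _ (Submodule.subset_span hx)⟩ : H)
          = (φ ⟨x, hx⟩ : H) := by
  have hinner := hiso.real_inner_map_map_of_subset_sphere hX hX
  have hmap := closedSpanEquivOfInner_apply φ hbij.2 hinner
  refine ⟨fun x y hx hy => real_inner_eq_one_sub_dist_sq_div_two hx hy,
    closedSpanEquivOfInner φ hbij.2 hinner, fun x hx => hmap ⟨x, hx⟩, fun T hT => ?_⟩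
  exact LinearIsometryEquiv.ext_on_topologicalClosure_span fun x hx =>
    Subtype.ext ((hT x hx).trans (hmap ⟨x, hx⟩).symm)
end

section
/- Let X be a uniform space. The sets of the form ⋃_{A ∈ γ} (V[A] × V[A]), where γ ranges over finite covers of X and V over entourages of X, form a basis of entourages for the totally bounded replica of the uniformity of X (the coarsest uniformity making all bounded uniformly continuous real-valued functions on X uniformly continuous). -/
/-!
An entourage `V` is refined by a uniformly continuous map `φ` into a pseudometric space: a
chain of symmetric entourages `W (n + 1) ○ W (n + 1) ⊆ W n ⊆ V` generates a countably generated,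
hence pseudometrizable, uniformity coarser than that of `X`. For a finite cover `γ`, the
truncated distances `x ↦ min ε (infDist (φ x) (φ '' A))`, `A ∈ γ`, are bounded and uniformly
continuous, and a pair `(x, y)` on which none of them moves by `ε / 2` lies in `V[A] × V[A]` for
any `A ∋ x`. Conversely, a bounded uniformly continuous `f : X → ℝᴺ` has totally bounded range;
the preimages of the balls of a finite `ε / 4`-net form a finite cover `γ`, and with
`V = {dist (f x) (f y) < ε / 4}` the set `⋃ A ∈ γ, V[A] × V[A]` lies in `{dist (f x) (f y) < ε}`.
Since common refinements of covers make these sets directed, they are a basis of a filter, and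
the two inclusions identify it with the totally bounded replica.
-/

/-- The V-neighbourhood V[A] of a set A in a uniform space. -/
def uNbhd {X : Type*} (V : Set (X × X)) (A : Set X) : Set X :=
  {x | ∃ a ∈ A, (x, a) ∈ V}

/-- The totally bounded replica of the uniformity of X: the filter on X × X
generated by the entourages {(x,y) : dist(f(x),f(y)) < ε} where f ranges over
bounded uniformly continuous maps into finite-dimensional Euclidean spaces. -/
def tbReplica (X : Type*) [UniformSpace X] : Filter (X × X) :=
  Filter.generate {S : Set (X × X) |
    ∃ (N : ℕ) (f : X → EuclideanSpace ℝ (Fin N)) (ε : ℝ), 0 < ε ∧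
      UniformContinuous f ∧ Bornology.IsBounded (Set.range f) ∧
      S = {p : X × X | dist (f p.1) (f p.2) < ε}}

open Set Filter Metric Bornology
open scoped Uniformity SetRel

universe u

section Pseudometrizable

lemma exists_pseudoMetricSpace_uniformity_eq_iInf {X : Type*} {W : ℕ → Set (X × X)}
    (hrefl : ∀ n x, (x, x) ∈ W n) (hsymm : ∀ n, SetRel.IsSymm (W n))
    (hcomp : ∀ n, W (n + 1) ○ W (n + 1) ⊆ W n) :
    ∃ I : PseudoMetricSpace X, @uniformity X I.toUniformSpace = ⨅ n, 𝓟 (W n) := by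
  have hanti : Antitone W :=
    antitone_nat_of_succ_le fun n p hp => hcomp n ⟨p.1, hrefl _ _, hp⟩
  have hbasis := hasBasis_iInf_principal hanti.directed_ge
  let core : UniformSpace.Core X := UniformSpace.Core.mk' (⨅ n, 𝓟 (W n))
    (fun r hr x => by
      obtain ⟨n, -, hn⟩ := hbasis.mem_iff.1 hr
      exact hn (hrefl n x))
    (fun r hr => by
      obtain ⟨n, -, hn⟩ := hbasis.mem_iff.1 hr
      exact hbasis.mem_of_superset trivial fun p hp => hn ((hsymm n).symm _ _ hp))
    (fun r hr => by
      obtain ⟨n, -, hn⟩ := hbasis.mem_iff.1 hr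
      exact ⟨W (n + 1), hbasis.mem_of_mem trivial, (hcomp n).trans hn⟩)
  obtain ⟨I, hI⟩ :=
    @UniformSpace.metrizable_uniformity X (.ofCore core) (isCountablyGenerated_seq W)
  exact ⟨I, by rw [hI]; rfl⟩

variable {X : Type u} [UniformSpace X]

lemma exists_seq_symm_comp_subset {V : Set (X × X)} (hV : V ∈ 𝓤 X) :
    ∃ W : ℕ → Set (X × X), (∀ n, W n ∈ 𝓤 X) ∧ (∀ n, SetRel.IsSymm (W n)) ∧
      (∀ n, W (n + 1) ○ W (n + 1) ⊆ W n) ∧ W 0 ⊆ V := by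
  choose! T hT hTsymm hTcomp using fun s (hs : s ∈ 𝓤 X) => comp_symm_mem_uniformity_sets hs
  have hmem : ∀ n, T^[n] V ∈ 𝓤 X := by
    intro n
    induction n with
    | zero => exact hV
    | succ n ih => rw [Function.iterate_succ_apply']; exact hT _ ih
  refine ⟨fun n => T^[n + 1] V, fun n => hmem (n + 1), fun n => ?_, fun n => ?_, ?_⟩ <;>
    simp only [Function.iterate_succ_apply', Function.iterate_zero_apply]
  · exact hTsymm _ (hmem n)
  · exact hTcomp _ (hT _ (hmem n))
  · exact (subset_comp_self_of_mem_uniformity (hT V hV)).trans (hTcomp V hV)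

lemma exists_uniformContinuous_pseudoMetric_of_mem_uniformity {V : Set (X × X)}
    (hV : V ∈ 𝓤 X) :
    ∃ (Y : Type u) (_ : PseudoMetricSpace Y) (φ : X → Y), UniformContinuous φ ∧
      ∃ ε > 0, ∀ x y, dist (φ x) (φ y) < ε → (x, y) ∈ V := by
  obtain ⟨W, hWmem, hWsymm, hWcomp, hWV⟩ := exists_seq_symm_comp_subset hV
  obtain ⟨I, hI⟩ := exists_pseudoMetricSpace_uniformity_eq_iInf
    (fun n _ => refl_mem_uniformity (hWmem n)) hWsymm hWcomp
  have hV' : V ∈ @uniformity X I.toUniformSpace := by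
    rw [hI]
    exact mem_iInf_of_mem 0 (mem_principal.2 hWV)
  obtain ⟨ε, hε, hball⟩ := (@mem_uniformity_dist X I V).1 hV'
  refine ⟨X, I, id, ?_, ε, hε, fun x y h => hball h⟩
  show 𝓤 X ≤ @uniformity X I.toUniformSpace
  rw [hI]
  exact le_iInf fun n => le_principal_iff.2 (hWmem n)

end Pseudometrizable

section Covers

variable {X : Type*}

lemma uNbhd_mono {V V' : Set (X × X)} {A A' : Set X} (hV : V ⊆ V') (hA : A ⊆ A') :
    uNbhd V A ⊆ uNbhd V' A' :=
  fun _ ⟨a, ha, hxa⟩ => ⟨a, hA ha, hV hxa⟩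

lemma sUnion_image₂_inter_eq_univ {γ₁ γ₂ : Finset (Set X)} (h₁ : ⋃₀ (↑γ₁ : Set (Set X)) = univ)
    (h₂ : ⋃₀ (↑γ₂ : Set (Set X)) = univ) :
    ⋃₀ (↑(Finset.image₂ (· ∩ ·) γ₁ γ₂) : Set (Set X)) = univ := by
  refine eq_univ_of_forall fun x => ?_
  obtain ⟨A₁, hA₁, hx₁⟩ := h₁ ▸ mem_univ x
  obtain ⟨A₂, hA₂, hx₂⟩ := h₂ ▸ mem_univ x
  exact ⟨A₁ ∩ A₂, Finset.mem_image₂_of_mem hA₁ hA₂, hx₁, hx₂⟩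

def coverEntourage (γ : Finset (Set X)) (V : Set (X × X)) : Set (X × X) :=
  ⋃ A ∈ γ, uNbhd V A ×ˢ uNbhd V A

lemma coverEntourage_image₂_inter_subset (γ₁ γ₂ : Finset (Set X)) (V₁ V₂ : Set (X × X)) :
    coverEntourage (Finset.image₂ (· ∩ ·) γ₁ γ₂) (V₁ ∩ V₂) ⊆
      coverEntourage γ₁ V₁ ∩ coverEntourage γ₂ V₂ := by
  intro p hp
  obtain ⟨_, hA, hpA⟩ := mem_iUnion₂.1 hp
  obtain ⟨A₁, hA₁, A₂, hA₂, rfl⟩ := Finset.mem_image₂.1 hA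
  have hm₁ : uNbhd (V₁ ∩ V₂) (A₁ ∩ A₂) ⊆ uNbhd V₁ A₁ :=
    uNbhd_mono inter_subset_left inter_subset_left
  have hm₂ : uNbhd (V₁ ∩ V₂) (A₁ ∩ A₂) ⊆ uNbhd V₂ A₂ :=
    uNbhd_mono inter_subset_right inter_subset_right
  exact ⟨mem_iUnion₂.2 ⟨A₁, hA₁, hm₁ hpA.1, hm₁ hpA.2⟩,
    mem_iUnion₂.2 ⟨A₂, hA₂, hm₂ hpA.1, hm₂ hpA.2⟩⟩

end Covers

section Replica

variable {X : Type*} [UniformSpace X]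

lemma setOf_dist_lt_mem_tbReplica {g : X → ℝ} (hg : UniformContinuous g)
    (hb : IsBounded (range g)) {ε : ℝ} (hε : 0 < ε) :
    {p : X × X | dist (g p.1) (g p.2) < ε} ∈ tbReplica X := by
  have hsingle : Isometry (EuclideanSpace.single (0 : Fin 1) : ℝ → EuclideanSpace ℝ (Fin 1)) :=
    .of_dist_eq (PiLp.dist_single_same 2 (fun _ : Fin 1 => ℝ) 0)
  refine mem_generate_of_mem ⟨1, EuclideanSpace.single 0 ∘ g, ε, hε,
    hsingle.uniformContinuous.comp hg, ?_, ?_⟩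
  · rw [range_comp]
    exact hsingle.lipschitz.isBounded_image hb
  · simp only [Function.comp_apply, hsingle.dist_eq]

lemma coverEntourage_mem_tbReplica {γ : Finset (Set X)} (hγ : ⋃₀ (↑γ : Set (Set X)) = univ)
    {V : Set (X × X)} (hV : V ∈ 𝓤 X) : coverEntourage γ V ∈ tbReplica X := by
  obtain ⟨Y, _, φ, hφ, ε, hε, hεV⟩ := exists_uniformContinuous_pseudoMetric_of_mem_uniformity hV
  let g : Set X → X → ℝ := fun A x => min ε (infDist (φ x) (φ '' A))
  have hg : ∀ A, {p : X × X | dist (g A p.1) (g A p.2) < ε / 2} ∈ tbReplica X := fun A =>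
    setOf_dist_lt_mem_tbReplica (((lipschitz_infDist_pt _).const_min ε).uniformContinuous.comp hφ)
      ((isBounded_Icc 0 ε).subset <| range_subset_iff.2 fun _ =>
        ⟨le_min hε.le infDist_nonneg, min_le_left _ _⟩) (half_pos hε)
  refine mem_of_superset ((biInter_finset_mem γ).2 fun A _ => hg A) ?_
  rintro ⟨x, y⟩ hxy
  obtain ⟨A, hA, hxA⟩ := hγ ▸ mem_univ x
  have hφxA : φ x ∈ φ '' A := mem_image_of_mem φ hxA
  have hgx : g A x = 0 := by simp [g, infDist_zero_of_mem hφxA, hε.le]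
  have hgy : g A y < ε / 2 := by
    have hxy : dist (g A x) (g A y) < ε / 2 := mem_iInter₂.1 hxy A hA
    rwa [hgx, dist_comm, Real.dist_0_eq_abs,
      abs_of_nonneg (le_min hε.le infDist_nonneg)] at hxy
  have hy : infDist (φ y) (φ '' A) < ε := by
    have := (min_lt_iff.1 hgy).resolve_left (by linarith)
    linarith
  obtain ⟨_, ⟨a, ha, rfl⟩, hya⟩ := (infDist_lt_iff ⟨_, hφxA⟩).1 hy
  exact mem_iUnion₂.2 ⟨A, hA, ⟨x, hxA, refl_mem_uniformity hV⟩, ⟨a, ha, hεV y a hya⟩⟩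

lemma exists_coverEntourage_subset_dist_lt {α : Type*} [PseudoMetricSpace α] {f : X → α}
    (hf : UniformContinuous f) (htb : TotallyBounded (range f)) {ε : ℝ} (hε : 0 < ε) :
    ∃ (γ : Finset (Set X)) (V : Set (X × X)), ⋃₀ (↑γ : Set (Set X)) = univ ∧ V ∈ 𝓤 X ∧
      coverEntourage γ V ⊆ {p | dist (f p.1) (f p.2) < ε} := by
  classical
  obtain ⟨t, htf, hcov⟩ := totallyBounded_iff.1 htb (ε / 4) (by positivity)
  refine ⟨htf.toFinset.image fun c => f ⁻¹' ball c (ε / 4),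
    {p | dist (f p.1) (f p.2) < ε / 4}, ?_, hf (dist_mem_uniformity (by positivity)), ?_⟩
  · refine eq_univ_of_forall fun x => ?_
    obtain ⟨c, hc, hxc⟩ := mem_iUnion₂.1 (hcov (mem_range_self x))
    exact ⟨_, Finset.mem_image_of_mem _ (htf.mem_toFinset.2 hc), hxc⟩
  · rintro ⟨x, y⟩ hxy
    obtain ⟨_, hA, ⟨a, ha, hxa⟩, ⟨b, hb, hyb⟩⟩ := mem_iUnion₂.1 hxy
    obtain ⟨c, -, rfl⟩ := Finset.mem_image.1 hA
    have hac : dist (f a) c < ε / 4 := ha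
    have hbc : dist (f b) c < ε / 4 := hb
    have hxa : dist (f x) (f a) < ε / 4 := hxa
    have hyb : dist (f y) (f b) < ε / 4 := hyb
    have hxc : dist (f x) c < ε / 2 := (dist_triangle _ (f a) _).trans_lt (by linarith)
    have hyc : dist (f y) c < ε / 2 := (dist_triangle _ (f b) _).trans_lt (by linarith)
    exact (dist_triangle_right _ _ c).trans_lt (by linarith)

end Replica

/-- the sets ⋃_{A ∈ γ} V[A] × V[A], for γ a finite cover of X and
V an entourage, form a basis of the totally bounded replica of the uniformity
of X. -/
theorem tbReplica_basis (X : Type*) [UniformSpace X] :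
    (tbReplica X).HasBasis
      (fun gv : Finset (Set X) × Set (X × X) =>
        (⋃₀ (↑gv.1 : Set (Set X)) = Set.univ) ∧ gv.2 ∈ uniformity X)
      (fun gv => ⋃ A ∈ gv.1, (uNbhd gv.2 A) ×ˢ (uNbhd gv.2 A)) := by
  have hB : IsBasis (fun gv : Finset (Set X) × Set (X × X) =>
      ⋃₀ (↑gv.1 : Set (Set X)) = univ ∧ gv.2 ∈ 𝓤 X) (fun gv => coverEntourage gv.1 gv.2) :=
    { nonempty := ⟨({univ}, univ), by simp, univ_mem⟩
      inter := fun {i j} ⟨hi, hVi⟩ ⟨hj, hVj⟩ =>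
        ⟨(Finset.image₂ (· ∩ ·) i.1 j.1, i.2 ∩ j.2),
          ⟨sUnion_image₂_inter_eq_univ hi hj, inter_mem hVi hVj⟩,
          coverEntourage_image₂_inter_subset _ _ _ _⟩ }
  have hEq : tbReplica X = hB.filter := by
    refine le_antisymm (fun t ht => ?_) (le_generate_iff.2 ?_)
    · obtain ⟨_, ⟨hγ, hV⟩, hsub⟩ := hB.mem_filter_iff.1 ht
      exact mem_of_superset (coverEntourage_mem_tbReplica hγ hV) hsub
    · rintro _ ⟨N, f, ε, hε, hf, hb, rfl⟩
      have htb := hb.isCompact_closure.totallyBounded.subset subset_closure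
      obtain ⟨γ, V, hγ, hV, hsub⟩ := exists_coverEntourage_subset_dist_lt hf htb hε
      exact hB.mem_filter_iff.2 ⟨(γ, V), ⟨hγ, hV⟩, hsub⟩
  rw [hEq]
  exact hB.hasBasis
end
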